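/- For every integer k ≥ 1, f(2^k − 1) ≤ (5/2)·k + 6. -/
import Mathlib


/-- `CanRepr n k` means the positive integer `n` can be built from exactly `k` ones
using additions and multiplications. -/
inductive CanRepr : ℕ → ℕ → Prop
  | one : CanRepr 1 1
  | add : ∀ {a b j k : ℕ}, CanRepr a j → CanRepr b k → CanRepr (a + b) (j + k)
  | mul : ∀ {a b j k : ℕ}, CanRepr a j → CanRepr b k → CanRepr (a * b) (j + k)

/-- The integer complexity `f(n)`: the least number of 1's needed to express `n`
using 1's, `+`, `*`, and parentheses. -/
noncomputable def complexity (n : ℕ) : ℕ := sInf {k | CanRepr n k}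

lemma canRepr_exists : ∀ n : ℕ, 1 ≤ n → ∃ k, CanRepr n k := by
  intro n hn
  induction n with
  | zero => omega
  | succ m ih =>
    rcases Nat.eq_or_lt_of_le hn with h | h
    · exact ⟨1, h ▸ CanRepr.one⟩
    · obtain ⟨j, hj⟩ := ih (by omega)
      exact ⟨j + 1, CanRepr.add hj CanRepr.one⟩

lemma complexity_le {n k : ℕ} (h : CanRepr n k) : complexity n ≤ k :=
  Nat.sInf_le h

lemma canRepr_complexity {n : ℕ} (hn : 1 ≤ n) : CanRepr n (complexity n) :=
  Nat.sInf_mem (canRepr_exists n hn)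

lemma cr_two : CanRepr 2 2 := CanRepr.add CanRepr.one CanRepr.one

lemma cr_pow2 : ∀ m : ℕ, 1 ≤ m → CanRepr (2 ^ m) (2 * m) := by
  intro m hm
  induction m with
  | zero => omega
  | succ j ih =>
    rcases Nat.eq_or_lt_of_le hm with h | h
    · have hj0 : j = 0 := by omega
      subst hj0
      exact cr_two
    · have hj : 1 ≤ j := by omega
      have := CanRepr.mul (ih hj) cr_two
      have e1 : 2 ^ j * 2 = 2 ^ (j + 1) := by ring
      have e2 : 2 * j + 2 = 2 * (j + 1) := by ring
      rwa [e1, e2] at this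

lemma cr_pow2_add1 (m : ℕ) (hm : 1 ≤ m) : CanRepr (2 ^ m + 1) (2 * m + 1) :=
  CanRepr.add (cr_pow2 m hm) CanRepr.one

lemma myMersennePos (m : ℕ) (hm : 1 ≤ m) : 1 ≤ 2 ^ m - 1 := by
  have : 2 ^ 1 ≤ 2 ^ m := Nat.pow_le_pow_right (by norm_num) hm
  omega

lemma cr_mersenne_3k : ∀ k : ℕ, 1 ≤ k → CanRepr (2 ^ k - 1) (3 * k - 2) := by
  intro k hk
  induction k with
  | zero => omega
  | succ j ih =>
    rcases Nat.eq_or_lt_of_le hk with h | h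
    · have h1 : 2 ^ (0 + 1) - 1 = 1 := by norm_num
      have h2 : 3 * (0 + 1) - 2 = 1 := by norm_num
      rw [← h]; rw [show (1:ℕ) = 0 + 1 from rfl] at *
      rw [h1, h2]; exact CanRepr.one
    · have hj : 1 ≤ j := by omega
      have := CanRepr.add (CanRepr.mul cr_two (ih hj)) CanRepr.one
      have hp := myMersennePos j hj
      have e1 : 2 * (2 ^ j - 1) + 1 = 2 ^ (j + 1) - 1 := by
        have : 2 ^ (j + 1) = 2 * 2 ^ j := by ring
        omega
      have e2 : 2 + (3 * j - 2) + 1 = 3 * (j + 1) - 2 := by omega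
      rwa [e1, e2] at this

lemma step_odd (j : ℕ) (hj : 1 ≤ j) :
    complexity (2 ^ (j + 1) - 1) ≤ complexity (2 ^ j - 1) + 3 := by
  have h1 := canRepr_complexity (myMersennePos j hj)
  have := CanRepr.add (CanRepr.mul cr_two h1) CanRepr.one
  have hp := myMersennePos j hj
  have e1 : 2 * (2 ^ j - 1) + 1 = 2 ^ (j + 1) - 1 := by
    have : 2 ^ (j + 1) = 2 * 2 ^ j := by ring
    omega
  rw [e1] at this
  calc complexity (2 ^ (j + 1) - 1) ≤ 2 + complexity (2 ^ j - 1) + 1 := complexity_le this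
    _ = complexity (2 ^ j - 1) + 3 := by omega

lemma step_even (m : ℕ) (hm : 1 ≤ m) :
    complexity (2 ^ (2 * m) - 1) ≤ complexity (2 ^ m - 1) + (2 * m + 1) := by
  have h1 := canRepr_complexity (myMersennePos m hm)
  have := CanRepr.mul h1 (cr_pow2_add1 m hm)
  have e1 : (2 ^ m - 1) * (2 ^ m + 1) = 2 ^ (2 * m) - 1 := by
    have h2 : 2 ^ (2 * m) = 2 ^ m * 2 ^ m := by rw [two_mul, pow_add]
    have hp : 1 ≤ 2 ^ m := Nat.one_le_two_pow
    obtain ⟨b, hb⟩ := Nat.exists_eq_add_of_le hp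
    rw [h2, hb]
    have e3 : (1 + b - 1) * (1 + b + 1) = b * b + 2 * b := by
      simp; ring
    have e4 : (1 + b) * (1 + b) = b * b + 2 * b + 1 := by ring
    rw [e3, e4]; omega
  rw [e1] at this
  exact complexity_le this

lemma main_nat : ∀ k : ℕ, 1 ≤ k → 2 * complexity (2 ^ k - 1) ≤ 5 * k + 12 := by
  intro k
  induction k using Nat.strong_induction_on with
  | _ k ih =>
    intro hk
    by_cases hsmall : k ≤ 16
    · have := complexity_le (cr_mersenne_3k k hk)
      omega
    · push_neg at hsmall
      rcases Nat.even_or_odd k with ⟨m, hm⟩ | ⟨m, hm⟩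
      · -- k = 2m, m ≥ 9
        have hm2 : k = 2 * m := by omega
        subst hm2
        have hm1 : 1 ≤ m := by omega
        have h1 := step_even m hm1
        have h2 := ih m (by omega) hm1
        omega
      · -- k = 2m + 1, m ≥ 8
        subst hm
        have hm1 : 1 ≤ m := by omega
        have h0 := step_odd (2 * m) (by omega)
        have h1 := step_even m hm1
        have h2 := ih m (by omega) hm1
        omega

theorem stmt_15 (k : ℕ) (hk : 1 ≤ k) :
    (complexity (2 ^ k - 1) : ℝ) ≤ 5 / 2 * (k : ℝ) + 6 := by
  have h := main_nat k hk
  have : (2 * complexity (2 ^ k - 1) : ℝ) ≤ (5 * k + 12 : ℕ) := by exact_mod_cast h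
  push_cast at this
  linarith
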